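/- arXiv:1401.3300 — 7 statements merged into one kernel-verified Lean document; each statement's English description precedes it below -/
import Mathlib

section
/- Suppose G = 0 and D > 0. If H > 0 and Γ > 0 satisfy the quadratic equation Γσ'(Γ)H² − 2(D + Γσ'(Γ)H*)H + 2DH* = 0 with σ'(Γ) < 0, then H is uniquely determined and equals (D + Γσ'(Γ)H* − √(D² + (Γσ'(Γ)H*)²)) / (Γσ'(Γ)); moreover this value satisfies H* < H < 2H*. -/
/-! Put `a = Γ σ'(Γ) < 0` and `s = √(D² + (a H*)²)`. Multiplying the quadratic by `a` and completing
the square turns it into `(a H - (D + a H*))² = s²`, so `a H = D + a H* ∓ s`. Since `s > |a H*|`,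
the root `a H = D + a H* + s` is positive, impossible for `H > 0`; hence `a H = D + a H* - s`.
Dividing by `a < 0`, `H* < H` amounts to `D < s`, and `H < 2 H*` to `s < D - a H*`, which after
squaring is `0 < -2 D a H*`. -/

open Set

lemma lt_sqrt_sq_add_sq (x : ℝ) {y : ℝ} (hy : y ≠ 0) : x < √(x ^ 2 + y ^ 2) :=
  Real.lt_sqrt_of_sq_lt (lt_add_of_pos_right _ (by positivity))

lemma sqrt_sq_add_sq_lt_sub {x y : ℝ} (hx : 0 < x) (hy : y < 0) : √(x ^ 2 + y ^ 2) < x - y := by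
  rw [Real.sqrt_lt' (by linarith)]
  nlinarith

section QuadraticRoot

variable {a D h x : ℝ}

lemma mul_eq_of_quadratic_eq_zero (ha : a < 0) (hD : 0 < D) (hx : 0 < x)
    (hq : a * x ^ 2 - 2 * (D + a * h) * x + 2 * D * h = 0) :
    a * x = D + a * h - √(D ^ 2 + (a * h) ^ 2) := by
  set s := √(D ^ 2 + (a * h) ^ 2)
  have hs : s ^ 2 = D ^ 2 + (a * h) ^ 2 := Real.sq_sqrt (by positivity)
  have hfactor : (a * x - (D + a * h - s)) * (a * x - (D + a * h + s)) = 0 := by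
    linear_combination a * hq - hs
  have hother : a * x - (D + a * h + s) ≠ 0 := by
    have hah : -(a * h) < s := Real.lt_sqrt_of_sq_lt (by nlinarith)
    linarith [mul_neg_of_neg_of_pos ha hx]
  linarith [(mul_eq_zero.mp hfactor).resolve_right hother]

lemma lt_quadratic_root (ha : a < 0) (hh : 0 < h) :
    h < (D + a * h - √(D ^ 2 + (a * h) ^ 2)) / a := by
  rw [lt_div_iff_of_neg ha]
  linarith [lt_sqrt_sq_add_sq D (mul_neg_of_neg_of_pos ha hh).ne]

lemma quadratic_root_lt_two_mul (ha : a < 0) (hD : 0 < D) (hh : 0 < h) :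
    (D + a * h - √(D ^ 2 + (a * h) ^ 2)) / a < 2 * h := by
  rw [div_lt_iff_of_neg ha]
  linarith [sqrt_sq_add_sq_lt_sub hD (mul_neg_of_neg_of_pos ha hh)]

end QuadraticRoot

/-- The quadratic for H (case G = 0, D > 0) has a unique positive root,
which lies strictly between H* and 2H*. -/
theorem stmt_4 (D Hstar Γ sp H : ℝ)
    (hD : 0 < D) (hHstar : 0 < Hstar) (hΓ : Γ ∈ Ioo (0:ℝ) 1)
    (hsp : sp < 0) (hHpos : 0 < H)
    (hquad : Γ * sp * H^2 - 2 * (D + Γ * sp * Hstar) * H + 2 * D * Hstar = 0) :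
    H = (D + Γ * sp * Hstar - Real.sqrt (D^2 + (Γ * sp * Hstar)^2)) / (Γ * sp) ∧
      Hstar < H ∧ H < 2 * Hstar := by
  have ha : Γ * sp < 0 := mul_neg_of_pos_of_neg hΓ.1 hsp
  have hH : H = (D + Γ * sp * Hstar - Real.sqrt (D^2 + (Γ * sp * Hstar)^2)) / (Γ * sp) := by
    rw [eq_div_iff ha.ne, mul_comm]
    exact mul_eq_of_quadratic_eq_zero ha hD hHpos hquad
  refine ⟨hH, ?_, ?_⟩ <;> rw [hH]
  · exact lt_quadratic_root ha hHstar
  · exact quadratic_root_lt_two_mul ha hD hHstar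
end

section
/- Let H solve H³H' = (6/G)(2H* − H) with H(0) = H₀ > 2H* and H > 0 on its maximal interval. Then H(ξ) > 2H* and H'(ξ) < 0 for all ξ in the maximal interval, and H satisfies the a priori bound H(ξ)³ ≤ H₀³ + (18/G)|ξ| for ξ < 0. -/
open Set

/-!
Near the equilibrium `2H*` the right-hand side `6 (2H* − h) / (G h³)` is bounded in absolute
value by `C (h − 2H*)` with `C = 6 / (G (2H*)³)`, so `H − 2H*` can decay at most exponentially,
forwards and backwards in `ξ`: it never reaches `0` in finite time. Hence `H > 2H*` and `H' < 0`.
Finally `(H³)' = 3H²H' = (18/G) (2H*/H − 1) ≥ −18/G`, and integrating this from `ξ < 0` to `0`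
gives the cubic bound.
-/

theorem lt_image_of_neg_mul_sub_le_deriv {u u' : ℝ → ℝ} {a b c C : ℝ}
    (hu : ∀ x ∈ Icc a b, HasDerivAt u (u' x) x)
    (hu' : ∀ x ∈ Ico a b, c < u x → -C * (u x - c) ≤ u' x) (ha : c < u a) :
    ∀ x ∈ Icc a b, c < u x := by
  set δ := u a - c
  -- the barrier `c + δ e^{-(C+1)(x-a)}`: the rate `C + 1 > C` makes the fence strict
  set e : ℝ → ℝ := fun x => Real.exp (-(C + 1) * (x - a))
  have he : ∀ x, HasDerivAt e (e x * -(C + 1)) x := fun x =>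
    (((hasDerivAt_id x).sub_const a).const_mul (-(C + 1))).exp.congr_deriv (by simp [e])
  have hfence := image_le_of_deriv_right_lt_deriv_boundary (f := fun x => -u x)
    (f' := fun x => -u' x) (B := fun x => -(c + δ * e x)) (B' := fun x => (C + 1) * (δ * e x))
    (fun x hx => (hu x hx).continuousAt.neg.continuousWithinAt)
    (fun x hx => (hu x (Ico_subset_Icc_self hx)).neg.hasDerivWithinAt)
    (by simp [e, δ])
    (fun x => (((he x).const_mul δ).const_add c).neg.congr_deriv (by ring))
    (fun x hx hfB => by
      have hδe : 0 < δ * e x := mul_pos (sub_pos.2 ha) (Real.exp_pos _)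
      have hux : u x - c = δ * e x := by linarith [hfB]
      have := hu' x hx (by linarith)
      rw [hux] at this
      linarith)
  intro x hx
  have hδe : 0 < δ * e x := mul_pos (sub_pos.2 ha) (Real.exp_pos _)
  linarith [hfence hx]

theorem lt_image_of_abs_deriv_le_mul_sub {u u' : ℝ → ℝ} {p q t₀ c C : ℝ} (ht₀ : t₀ ∈ Ioo p q)
    (hu : ∀ x ∈ Ioo p q, HasDerivAt u (u' x) x)
    (hu' : ∀ x ∈ Ioo p q, c < u x → |u' x| ≤ C * (u x - c)) (h₀ : c < u t₀) :
    ∀ x ∈ Ioo p q, c < u x := by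
  intro x hx
  rcases le_total t₀ x with hle | hle
  · have hsub : Icc t₀ x ⊆ Ioo p q := Icc_subset_Ioo ht₀.1 hx.2
    refine lt_image_of_neg_mul_sub_le_deriv (C := C) (fun y hy => hu y (hsub hy)) (fun y hy hcy => ?_)
      h₀ x (right_mem_Icc.2 hle)
    linarith [neg_abs_le (u' y), hu' y (hsub (Ico_subset_Icc_self hy)) hcy]
  · have hsub : ∀ y ∈ Icc (-t₀) (-x), -y ∈ Ioo p q := fun y hy =>
      ⟨by linarith [hy.2, hx.1], by linarith [hy.1, ht₀.2]⟩
    have hrev := lt_image_of_neg_mul_sub_le_deriv (u := fun y => u (-y))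
      (u' := fun y => -u' (-y)) (C := C)
      (fun y hy => ((hu (-y) (hsub y hy)).scomp y (hasDerivAt_neg y)).congr_deriv (by simp))
      (fun y hy hcy => by
        linarith [le_abs_self (u' (-y)), hu' (-y) (hsub y (Ico_subset_Icc_self hy)) hcy])
      (by simpa using h₀) (-x) (right_mem_Icc.2 (neg_le_neg hle))
    simpa using hrev

theorem abs_div_le_mul_sub_of_lt {G Hstar h : ℝ} (hG : 0 < G) (hHstar : 0 < Hstar)
    (hh : 2 * Hstar < h) :
    |6 * (2 * Hstar - h) / (G * h ^ 3)| ≤ 6 / (G * (2 * Hstar) ^ 3) * (h - 2 * Hstar) := by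
  have hcube : (2 * Hstar) ^ 3 ≤ h ^ 3 := pow_le_pow_left₀ (by positivity) hh.le 3
  calc |6 * (2 * Hstar - h) / (G * h ^ 3)| = 6 * (h - 2 * Hstar) / (G * h ^ 3) := by
        have : 0 < h := by linarith
        rw [abs_div, abs_of_nonpos (by linarith), abs_of_pos (by positivity)]
        ring
    _ ≤ 6 * (h - 2 * Hstar) / (G * (2 * Hstar) ^ 3) := by gcongr
    _ = 6 / (G * (2 * Hstar) ^ 3) * (h - 2 * Hstar) := by ring

theorem HasDerivAt.cube_of_ode {H : ℝ → ℝ} {G Hstar ξ : ℝ} (hG : G ≠ 0) (hH : H ξ ≠ 0)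
    (hode : HasDerivAt H (6 * (2 * Hstar - H ξ) / (G * H ξ ^ 3)) ξ) :
    HasDerivAt (fun x => H x ^ 3) (18 / G * (2 * Hstar / H ξ - 1)) ξ :=
  (hode.pow 3).congr_deriv (by field_simp; ring)

theorem stmt_11_general (G Hstar H₀ ξα ξω : ℝ) (hG : 0 < G) (hHstar : 0 < Hstar)
    (hH₀ : 2 * Hstar < H₀) (hξα : 0 < ξα) (hξω : 0 < ξω)
    (H : ℝ → ℝ)
    (hode : ∀ ξ ∈ Ioo (-ξα) ξω,
      HasDerivAt H (6 * (2 * Hstar - H ξ) / (G * (H ξ)^3)) ξ)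
    (hinit : H 0 = H₀) :
    (∀ ξ ∈ Ioo (-ξα) ξω, 2 * Hstar < H ξ ∧ deriv H ξ < 0) ∧
      (∀ ξ ∈ Ioo (-ξα) ξω, ξ < 0 → (H ξ)^3 ≤ H₀^3 + 18 / G * |ξ|) := by
  have h0 : (0 : ℝ) ∈ Ioo (-ξα) ξω := ⟨neg_lt_zero.2 hξα, hξω⟩
  have habove : ∀ ξ ∈ Ioo (-ξα) ξω, 2 * Hstar < H ξ :=
    lt_image_of_abs_deriv_le_mul_sub h0 hode
      (fun _ _ hξ => abs_div_le_mul_sub_of_lt hG hHstar hξ) (hinit ▸ hH₀)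
  have hpos : ∀ ξ ∈ Ioo (-ξα) ξω, 0 < H ξ := fun ξ hξ => by linarith [habove ξ hξ]
  refine ⟨fun ξ hξ => ⟨habove ξ hξ, ?_⟩, fun ξ hξ hξ0 => ?_⟩
  · rw [(hode ξ hξ).deriv]
    have := hpos ξ hξ
    exact div_neg_of_neg_of_pos (by linarith [habove ξ hξ]) (by positivity)
  · have hcube : ∀ x ∈ Ioo (-ξα) ξω,
        HasDerivAt (fun x => H x ^ 3) (18 / G * (2 * Hstar / H x - 1)) x := fun x hx =>
      (hode x hx).cube_of_ode hG.ne' (hpos x hx).ne'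
    have hmvt := (convex_Ioo (-ξα) ξω).mul_sub_le_image_sub_of_le_deriv
      (fun x hx => (hcube x hx).continuousAt.continuousWithinAt)
      (fun x hx => (hcube x (interior_subset hx)).differentiableAt.differentiableWithinAt)
      (C := -(18 / G)) (fun x hx => by
        have hx' := interior_subset hx
        rw [(hcube x hx').deriv]
        have : 0 ≤ 2 * Hstar / H x := by have := hpos x hx'; positivity
        nlinarith [div_pos (by norm_num : (0 : ℝ) < 18) hG])
      ξ hξ 0 h0 hξ0.le
    rw [abs_of_neg hξ0, ← hinit]
    linarith

/-- For H₀ > 2H*, the positive solution of H³H' = (6/G)(2H* − H) stays above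
2H*, is strictly decreasing, and satisfies H³ ≤ H₀³ + (18/G)|ξ| for ξ < 0. -/
theorem stmt_11 (G Hstar H₀ ξα ξω : ℝ) (hG : 0 < G) (hHstar : 0 < Hstar)
    (hH₀ : 2 * Hstar < H₀) (hξα : 0 < ξα) (hξω : 0 < ξω)
    (H : ℝ → ℝ)
    (hHpos : ∀ ξ ∈ Ioo (-ξα) ξω, 0 < H ξ)
    (hode : ∀ ξ ∈ Ioo (-ξα) ξω,
      HasDerivAt H (6 * (2 * Hstar - H ξ) / (G * (H ξ)^3)) ξ)
    (hinit : H 0 = H₀) :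
    (∀ ξ ∈ Ioo (-ξα) ξω, 2 * Hstar < H ξ ∧ deriv H ξ < 0) ∧
      (∀ ξ ∈ Ioo (-ξα) ξω, ξ < 0 → (H ξ)^3 ≤ H₀^3 + 18 / G * |ξ|) :=
  stmt_11_general G Hstar H₀ ξα ξω hG hHstar hH₀ hξα hξω H hode hinit
end

section
/- Let Ĥ solve Ĥ' = 3(H* − Ĥ)/(GĤ³) on (0, ∞) with Ĥ(0) = 2H*, where G > 0, H* > 0. Then Ĥ is strictly decreasing, satisfies H* < Ĥ(ξ) < 2H* for all ξ > 0, exists globally on [0, ∞), and Ĥ(ξ) → H* as ξ → ∞. -/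
open Set Filter Topology

/-!
Separation of variables. Let ψ be a primitive of h³/(h − H*) on (H*, ∞); along a solution,
(ψ ∘ Ĥ)' = −3/G, so Ĥ(ξ) = ψ⁻¹(ψ(2H*) − 3ξ/G). Since ψ increases from −∞ (through the term
H*³ log(h − H*)) to +∞, ψ⁻¹ is an increasing differentiable bijection ℝ → (H*, ∞) tending to H*
at −∞: this gives global existence, monotonicity, the bounds and the limit at once.
-/

noncomputable def psi (a h : ℝ) : ℝ :=
  h ^ 3 / 3 + a * h ^ 2 / 2 + a ^ 2 * h + a ^ 3 * Real.log (h - a)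

section

variable {a : ℝ}

theorem hasDerivAt_psi {h : ℝ} (hah : a < h) : HasDerivAt (psi a) (h ^ 3 / (h - a)) h := by
  have hne : h - a ≠ 0 := (sub_pos.2 hah).ne'
  have hlog : HasDerivAt (fun x => Real.log (x - a)) (h - a)⁻¹ h := by
    simpa using ((hasDerivAt_id h).sub_const a).log hne
  refine (((((hasDerivAt_pow 3 h).div_const 3).add
    (((hasDerivAt_pow 2 h).const_mul a).div_const 2)).add
    ((hasDerivAt_id h).const_mul (a ^ 2))).add (hlog.const_mul (a ^ 3))).congr_deriv ?_
  field_simp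
  ring

theorem continuousOn_psi : ContinuousOn (psi a) (Ioi a) := fun _ hh =>
  (hasDerivAt_psi hh).continuousAt.continuousWithinAt

theorem strictMonoOn_psi (ha : 0 < a) : StrictMonoOn (psi a) (Ioi a) := by
  refine strictMonoOn_of_hasDerivWithinAt_pos (convex_Ioi a) continuousOn_psi
    (fun h hh => (hasDerivAt_psi (interior_subset hh)).hasDerivWithinAt) fun h hh => ?_
  rw [interior_Ioi, mem_Ioi] at hh
  have hh0 : 0 < h := ha.trans hh
  have hha : 0 < h - a := sub_pos.2 hh
  positivity

theorem tendsto_psi_atTop (ha : 0 < a) : Tendsto (psi a) atTop atTop := by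
  have hlog : Tendsto (fun h => a ^ 3 * Real.log (h - a)) atTop atTop :=
    (Real.tendsto_log_atTop.comp (tendsto_atTop_add_const_right _ (-a) tendsto_id)).const_mul_atTop
      (by positivity)
  exact ((((tendsto_pow_atTop three_ne_zero).atTop_div_const three_pos).atTop_add_atTop
    (((tendsto_pow_atTop two_ne_zero).const_mul_atTop ha).atTop_div_const two_pos)).atTop_add_atTop
    (tendsto_id.const_mul_atTop (pow_pos ha 2))).atTop_add_atTop hlog

theorem tendsto_psi_nhdsGT (ha : 0 < a) : Tendsto (psi a) (𝓝[>] a) atBot := by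
  have hpoly : Tendsto (fun h => h ^ 3 / 3 + a * h ^ 2 / 2 + a ^ 2 * h) (𝓝[>] a)
      (𝓝 (a ^ 3 / 3 + a * a ^ 2 / 2 + a ^ 2 * a)) :=
    (Continuous.tendsto (by fun_prop) a).mono_left nhdsWithin_le_nhds
  have hshift : Tendsto (fun h => h - a) (𝓝[>] a) (𝓝[>] 0) := by
    refine tendsto_nhdsWithin_of_tendsto_nhds_of_eventually_within _ ?_
      (eventually_nhdsWithin_of_forall fun h (hh : a < h) => sub_pos.2 hh)
    simpa using ((continuous_sub_right a).tendsto a).mono_left nhdsWithin_le_nhds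
  exact hpoly.add_atBot ((Real.tendsto_log_nhdsGT_zero.comp hshift).const_mul_atBot (by positivity))

theorem surjOn_psi (ha : 0 < a) : SurjOn (psi a) (Ioi a) univ :=
  continuousOn_psi.surjOn_of_tendsto nonempty_Ioi
    ((tendsto_comp_coe_Ioi_atBot).2 (tendsto_psi_nhdsGT ha))
    ((tendsto_psi_atTop ha).comp (tendsto_Ioi_atTop.1 tendsto_id))

noncomputable def psiOrderIso (ha : 0 < a) : Ioi a ≃o ℝ :=
  StrictMono.orderIsoOfSurjective (fun h : Ioi a => psi a h)
    (fun _ _ hlt => strictMonoOn_psi ha (Subtype.property _) (Subtype.property _) hlt)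
    (surjOn_iff_surjective.1 (surjOn_psi ha))

noncomputable def psiInv (ha : 0 < a) (y : ℝ) : ℝ := (psiOrderIso ha).symm y

theorem lt_psiInv (ha : 0 < a) (y : ℝ) : a < psiInv ha y := ((psiOrderIso ha).symm y).2

theorem psi_psiInv (ha : 0 < a) (y : ℝ) : psi a (psiInv ha y) = y :=
  StrictMono.orderIsoOfSurjective_self_symm_apply (fun h : Ioi a => psi a h) _ _ y

theorem psiInv_psi (ha : 0 < a) {h : ℝ} (hah : a < h) : psiInv ha (psi a h) = h :=
  congrArg Subtype.val
    (StrictMono.orderIsoOfSurjective_symm_apply_self (fun h : Ioi a => psi a h) _ _ ⟨h, hah⟩)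

theorem strictMono_psiInv (ha : 0 < a) : StrictMono (psiInv ha) := fun _ _ hlt =>
  Subtype.coe_lt_coe.2 ((psiOrderIso ha).symm.strictMono hlt)

theorem continuous_psiInv (ha : 0 < a) : Continuous (psiInv ha) :=
  continuous_subtype_val.comp (psiOrderIso ha).symm.continuous

theorem tendsto_psiInv_atBot (ha : 0 < a) : Tendsto (psiInv ha) atBot (𝓝 a) :=
  ((tendsto_Ioi_atBot).1 (psiOrderIso ha).symm.tendsto_atBot).mono_right nhdsWithin_le_nhds

theorem hasDerivAt_psiInv (ha : 0 < a) (y : ℝ) :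
    HasDerivAt (psiInv ha) ((psiInv ha y - a) / psiInv ha y ^ 3) y := by
  have hpos : 0 < psiInv ha y - a := sub_pos.2 (lt_psiInv ha y)
  have hpos' : 0 < psiInv ha y := ha.trans (lt_psiInv ha y)
  rw [← inv_div]
  exact HasDerivAt.of_local_left_inverse (continuous_psiInv ha).continuousAt
    (hasDerivAt_psi (lt_psiInv ha y)) (by positivity) (.of_forall (psi_psiInv ha))

end

/-- There is a global solution Ĥ of Ĥ' = 3(H* − Ĥ)/(GĤ³) on [0, ∞) with
Ĥ(0) = 2H*, which is strictly decreasing, satisfies H* < Ĥ < 2H* for ξ > 0,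
and converges to H* at infinity. -/
theorem stmt_12 (G Hstar : ℝ) (hG : 0 < G) (hHstar : 0 < Hstar) :
    ∃ Hhat : ℝ → ℝ,
      Hhat 0 = 2 * Hstar ∧
      (∀ ξ ∈ Ici (0:ℝ),
        HasDerivAt Hhat (3 * (Hstar - Hhat ξ) / (G * (Hhat ξ)^3)) ξ) ∧
      StrictAntiOn Hhat (Ici (0:ℝ)) ∧
      (∀ ξ > (0:ℝ), Hstar < Hhat ξ ∧ Hhat ξ < 2 * Hstar) ∧
      Filter.Tendsto Hhat Filter.atTop (nhds Hstar) := by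
  have hk : 0 < 3 / G := by positivity
  set c := psi Hstar (2 * Hstar)
  have hc : psiInv hHstar c = 2 * Hstar := psiInv_psi hHstar (by linarith)
  refine ⟨fun ξ => psiInv hHstar (c - 3 / G * ξ), by simpa using hc, fun ξ _ => ?_,
    fun ξ _ η _ hlt => strictMono_psiInv hHstar (by nlinarith),
    fun ξ hξ => ⟨lt_psiInv _ _, ?_⟩, ?_⟩
  · have hpos : 0 < psiInv hHstar (c - 3 / G * ξ) := hHstar.trans (lt_psiInv _ _)
    refine ((hasDerivAt_psiInv hHstar _).comp ξ
      (((hasDerivAt_id' ξ).const_mul (3 / G)).const_sub c)).congr_deriv ?_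
    dsimp only
    generalize psiInv hHstar (c - 3 / G * ξ) = h at hpos ⊢
    field_simp
    ring
  · simpa only [hc] using strictMono_psiInv hHstar (show c - 3 / G * ξ < c by nlinarith)
  · have : Tendsto (fun ξ => c - 3 / G * ξ) atTop atBot := by
      simpa only [sub_eq_add_neg, Function.comp_def, id] using
        tendsto_atBot_add_const_left _ c (tendsto_neg_atTop_atBot.comp (tendsto_id.const_mul_atTop hk))
    exact (tendsto_psiInv_atBot hHstar).comp this
end

section
/- Suppose G > 0, D > 0 and (H, Γ) is differentiable and solves H + (GH³/3)H' − (H²/2)σ'(Γ)Γ' = H* and Γ + (GH²/2)ΓH' − (HΓσ'(Γ) − D)Γ' = 0 with H > 0, 0 < Γ < 1 and σ'(Γ) < 0. Then (H, Γ) solves the explicit first-order system H' = [6ΓH(2H* − H) − 12D(H − H*)ϱ(Γ)] / [GH³(ΓH + 4Dϱ(Γ))] and Γ' = 2Γ(H − 3H*)ϱ(Γ) / [H(ΓH + 4Dϱ(Γ))], where ϱ = −1/σ'. In particular the denominator ΓH + 4Dϱ(Γ) is strictly positive. -/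
/-!
At each point the two equations are linear in `(H', Γ')`. Writing `h, g, s, r` for
`H, Γ, σ'(Γ), ϱ(Γ)`, the determinant of the system is `G h³ (4D − h g s) / 12`, which equals
`r⁻¹ · G h³ (g h + 4 D r) / 12` because `s r = −1`; since `r > 0` the factor `g h + 4 D r` is
positive, and Cramer's rule gives the explicit formulas.
-/

open Set

section ExplicitSystem

variable {K : Type*} [Field K] [CharZero K] {G D Hstar h g s r x y : K}

theorem travelingWave_dH_eq (hsr : s * r = -1) (hG : G ≠ 0) (hh : h ≠ 0)
    (hden : g * h + 4 * D * r ≠ 0)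
    (e1 : h + G * h ^ 3 / 3 * x - h ^ 2 / 2 * s * y = Hstar)
    (e2 : g + G * h ^ 2 / 2 * g * x - (h * g * s - D) * y = 0) :
    x = (6 * g * h * (2 * Hstar - h) - 12 * D * (h - Hstar) * r)
      / (G * h ^ 3 * (g * h + 4 * D * r)) := by
  rw [eq_div_iff (by simp [hG, hh, hden])]
  linear_combination (12 * r * (D - h * g * s)) * e1 + (6 * r * h ^ 2 * s) * e2
    + (x * G * h ^ 4 * g - 12 * g * h * Hstar + 6 * g * h ^ 2) * hsr

theorem travelingWave_dΓ_eq (hsr : s * r = -1) (hh : h ≠ 0)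
    (hden : g * h + 4 * D * r ≠ 0)
    (e1 : h + G * h ^ 3 / 3 * x - h ^ 2 / 2 * s * y = Hstar)
    (e2 : g + G * h ^ 2 / 2 * g * x - (h * g * s - D) * y = 0) :
    y = 2 * g * (h - 3 * Hstar) * r / (h * (g * h + 4 * D * r)) := by
  rw [eq_div_iff (mul_ne_zero hh hden)]
  linear_combination (-6 * r * g) * e1 + (4 * r * h) * e2 + (y * h ^ 2 * g) * hsr

end ExplicitSystem

theorem stmt_13_general (G D Hstar : ℝ) (hG : 0 < G) (hD : 0 < D)
    (σ' ϱ : ℝ → ℝ)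
    (hσ'neg : ∀ z ∈ Ico (0:ℝ) 1, σ' z < 0)
    (hϱ : ∀ z ∈ Ico (0:ℝ) 1, ϱ z = -1 / σ' z)
    (H Γ H' Γ' : ℝ → ℝ)
    (hHpos : ∀ ξ, 0 < H ξ) (hΓrange : ∀ ξ, Γ ξ ∈ Ioo (0:ℝ) 1)
    (heq1 : ∀ ξ, H ξ + G * (H ξ)^3 / 3 * H' ξ
        - (H ξ)^2 / 2 * σ' (Γ ξ) * Γ' ξ = Hstar)
    (heq2 : ∀ ξ, Γ ξ + G * (H ξ)^2 / 2 * Γ ξ * H' ξ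
        - (H ξ * Γ ξ * σ' (Γ ξ) - D) * Γ' ξ = 0) :
    ∀ ξ, 0 < Γ ξ * H ξ + 4 * D * ϱ (Γ ξ) ∧
      H' ξ = (6 * Γ ξ * H ξ * (2 * Hstar - H ξ)
          - 12 * D * (H ξ - Hstar) * ϱ (Γ ξ))
        / (G * (H ξ)^3 * (Γ ξ * H ξ + 4 * D * ϱ (Γ ξ))) ∧
      Γ' ξ = 2 * Γ ξ * (H ξ - 3 * Hstar) * ϱ (Γ ξ)
        / (H ξ * (Γ ξ * H ξ + 4 * D * ϱ (Γ ξ))) := by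
  intro ξ
  obtain ⟨hΓpos, hΓlt⟩ := hΓrange ξ
  have hΓmem : Γ ξ ∈ Ico (0:ℝ) 1 := ⟨hΓpos.le, hΓlt⟩
  have hσneg := hσ'neg _ hΓmem
  have hϱpos : 0 < ϱ (Γ ξ) := by
    rw [hϱ _ hΓmem]
    exact div_pos_of_neg_of_neg neg_one_lt_zero hσneg
  have hσϱ : σ' (Γ ξ) * ϱ (Γ ξ) = -1 := by
    rw [hϱ _ hΓmem, mul_div_cancel₀ _ hσneg.ne]
  have hHξ := hHpos ξ
  have hden : 0 < Γ ξ * H ξ + 4 * D * ϱ (Γ ξ) := by positivity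
  exact ⟨hden,
    travelingWave_dH_eq hσϱ hG.ne' hHξ.ne' hden.ne' (heq1 ξ) (heq2 ξ),
    travelingWave_dΓ_eq hσϱ hHξ.ne' hden.ne' (heq1 ξ) (heq2 ξ)⟩

/-- With G, D > 0, the traveling wave system is equivalent to an explicit
first-order system with positive denominator, where ϱ = −1/σ'. -/
theorem stmt_13 (G D Hstar : ℝ) (hG : 0 < G) (hD : 0 < D) (hHstar : 0 < Hstar)
    (σ' ϱ : ℝ → ℝ)
    (hσ'neg : ∀ z ∈ Ico (0:ℝ) 1, σ' z < 0)
    (hϱ : ∀ z ∈ Ico (0:ℝ) 1, ϱ z = -1 / σ' z)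
    (H Γ H' Γ' : ℝ → ℝ)
    (hHpos : ∀ ξ, 0 < H ξ) (hΓrange : ∀ ξ, Γ ξ ∈ Ioo (0:ℝ) 1)
    (hHd : ∀ ξ, HasDerivAt H (H' ξ) ξ)
    (hΓd : ∀ ξ, HasDerivAt Γ (Γ' ξ) ξ)
    (heq1 : ∀ ξ, H ξ + G * (H ξ)^3 / 3 * H' ξ
        - (H ξ)^2 / 2 * σ' (Γ ξ) * Γ' ξ = Hstar)
    (heq2 : ∀ ξ, Γ ξ + G * (H ξ)^2 / 2 * Γ ξ * H' ξ
        - (H ξ * Γ ξ * σ' (Γ ξ) - D) * Γ' ξ = 0) :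
    ∀ ξ, 0 < Γ ξ * H ξ + 4 * D * ϱ (Γ ξ) ∧
      H' ξ = (6 * Γ ξ * H ξ * (2 * Hstar - H ξ)
          - 12 * D * (H ξ - Hstar) * ϱ (Γ ξ))
        / (G * (H ξ)^3 * (Γ ξ * H ξ + 4 * D * ϱ (Γ ξ))) ∧
      Γ' ξ = 2 * Γ ξ * (H ξ - 3 * Hstar) * ϱ (Γ ξ)
        / (H ξ * (Γ ξ * H ξ + 4 * D * ϱ (Γ ξ))) :=
  stmt_13_general G D Hstar hG hD σ' ϱ hσ'neg hϱ H Γ H' Γ' hHpos hΓrange heq1 heq2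
end

section
/- Let (H, Γ) be a solution of the gravity–diffusion traveling wave system H' = f₁(H, Γ), Γ' = f₂(H, Γ) on [0, ξ_ω) with H(ξ) ∈ (H*, 2H*) and Γ(ξ) ∈ (0,1) for all ξ. If there is μ > 0 with ΓH + 4Dϱ(Γ) ≥ μ on the trajectory, then Γ'(ξ) ≥ −(4R_ϱ/μ)Γ(ξ), hence Γ(ξ) ≥ Γ(0)·exp(−4R_ϱ ξ/μ) for all ξ ∈ [0, ξ_ω). In particular Γ cannot reach 0 in finite time. -/
open Set Real

/-!
Since `H* < H`, the factor `2(H − 3H*)/H` in `Γ' = f₂(H, Γ)` is at least `−4`, and `ϱ ≤ R_ϱ`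
together with a denominator at least `μ` gives `Γ' ≥ −(4R_ϱ/μ)Γ`. Then `Γ(ξ)·exp(4R_ϱξ/μ)` is
nondecreasing, which is the exponential lower bound.
-/
theorem mul_exp_le_of_neg_mul_le_deriv {f f' : ℝ → ℝ} {a b c : ℝ}
    (hf : ∀ x ∈ Ico a b, HasDerivAt f (f' x) x) (hf' : ∀ x ∈ Ico a b, -c * f x ≤ f' x)
    {x : ℝ} (hx : x ∈ Ico a b) : f a * exp (-(c * (x - a))) ≤ f x := by
  set g : ℝ → ℝ := fun y => f y * exp (c * y)
  have hg : ∀ y ∈ Ico a b, HasDerivAt g ((f' y + c * f y) * exp (c * y)) y := fun y hy =>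
    ((hf y hy).mul (((hasDerivAt_id y).const_mul c).exp)).congr_deriv
      (by simp only [id, mul_one]; ring)
  have hmono : MonotoneOn g (Ico a b) := by
    refine monotoneOn_of_hasDerivWithinAt_nonneg (convex_Ico a b)
      (fun y hy => (hg y hy).continuousAt.continuousWithinAt)
      (fun y hy => (hg y (interior_subset hy)).hasDerivWithinAt) fun y hy => ?_
    have := hf' y (interior_subset hy)
    exact mul_nonneg (by linarith) (exp_pos _).le
  have hax : g a ≤ g x := hmono ⟨le_rfl, hx.1.trans_lt hx.2⟩ hx hx.1
  calc f a * exp (-(c * (x - a))) = g a * exp (-(c * x)) := by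
        rw [show -(c * (x - a)) = c * a + -(c * x) by ring, exp_add, mul_assoc]
    _ ≤ g x * exp (-(c * x)) := by gcongr
    _ = f x := by simp only [g, mul_assoc, ← exp_add, add_neg_cancel, exp_zero, mul_one]

/-- The component `f₂` of the traveling-wave vector field, so that `Γ' = f₂(H, Γ)`. -/
noncomputable def gammaField (D Hstar : ℝ) (ϱ : ℝ → ℝ) (H Γ : ℝ) : ℝ :=
  2 * Γ * (H - 3 * Hstar) * ϱ Γ / (H * (Γ * H + 4 * D * ϱ Γ))

theorem neg_mul_le_gammaField {D Hstar R μ H Γ : ℝ} {ϱ : ℝ → ℝ} (hμ : 0 < μ)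
    (hH : Hstar < H) (hH₀ : 0 < H) (hΓ : 0 ≤ Γ) (hϱ₀ : 0 ≤ ϱ Γ) (hϱR : ϱ Γ ≤ R)
    (hden : μ ≤ Γ * H + 4 * D * ϱ Γ) :
    -(4 * R / μ) * Γ ≤ gammaField D Hstar ϱ H Γ := by
  have hden₀ : 0 < Γ * H + 4 * D * ϱ Γ := hμ.trans_le hden
  have hratio : -4 ≤ 2 * (H - 3 * Hstar) / H := by
    rw [le_div_iff₀ hH₀]; linarith
  calc -(4 * R / μ) * Γ = -4 * (R * Γ / μ) := by ring
    _ ≤ -4 * (ϱ Γ * Γ / (Γ * H + 4 * D * ϱ Γ)) := by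
        have : ϱ Γ * Γ / (Γ * H + 4 * D * ϱ Γ) ≤ R * Γ / μ :=
          div_le_div₀ (mul_nonneg (hϱ₀.trans hϱR) hΓ) (by gcongr) hμ hden
        linarith
    _ ≤ 2 * (H - 3 * Hstar) / H * (ϱ Γ * Γ / (Γ * H + 4 * D * ϱ Γ)) := by
        gcongr
    _ = gammaField D Hstar ϱ H Γ := by
        unfold gammaField; field_simp

theorem stmt_16_general (D Hstar Rϱ μ ξω : ℝ)
    (hμ : 0 < μ)
    (ϱ : ℝ → ℝ) (hϱnonneg : ∀ z ∈ Icc (0:ℝ) 1, 0 ≤ ϱ z)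
    (hRϱ : ∀ z ∈ Icc (0:ℝ) 1, ϱ z ≤ Rϱ)
    (H Γ : ℝ → ℝ)
    (hHrange : ∀ ξ ∈ Ico (0:ℝ) ξω, H ξ ∈ Ioo Hstar (2 * Hstar))
    (hΓrange : ∀ ξ ∈ Ico (0:ℝ) ξω, Γ ξ ∈ Ioo (0:ℝ) 1)
    (hΓd : ∀ ξ ∈ Ico (0:ℝ) ξω,
      HasDerivAt Γ (2 * Γ ξ * (H ξ - 3 * Hstar) * ϱ (Γ ξ)
        / (H ξ * (Γ ξ * H ξ + 4 * D * ϱ (Γ ξ)))) ξ)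
    (hμbound : ∀ ξ ∈ Ico (0:ℝ) ξω, μ ≤ Γ ξ * H ξ + 4 * D * ϱ (Γ ξ)) :
    (∀ ξ ∈ Ico (0:ℝ) ξω, -(4 * Rϱ / μ) * Γ ξ ≤ deriv Γ ξ) ∧
      (∀ ξ ∈ Ico (0:ℝ) ξω, Γ 0 * Real.exp (-(4 * Rϱ * ξ) / μ) ≤ Γ ξ) ∧
      (∀ ξ ∈ Ico (0:ℝ) ξω, 0 < Γ ξ) := by
  have hΓ' : ∀ ξ ∈ Ico (0:ℝ) ξω, -(4 * Rϱ / μ) * Γ ξ ≤ gammaField D Hstar ϱ (H ξ) (Γ ξ) := by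
    intro ξ hξ
    obtain ⟨hHlow, hHup⟩ := hHrange ξ hξ
    have hΓξ := hΓrange ξ hξ
    have hmem : Γ ξ ∈ Icc (0:ℝ) 1 := Ioo_subset_Icc_self hΓξ
    exact neg_mul_le_gammaField hμ hHlow (by linarith) hΓξ.1.le (hϱnonneg _ hmem) (hRϱ _ hmem)
      (hμbound ξ hξ)
  refine ⟨fun ξ hξ => (hΓd ξ hξ).deriv ▸ hΓ' ξ hξ, fun ξ hξ => ?_, fun ξ hξ => (hΓrange ξ hξ).1⟩
  rw [show -(4 * Rϱ * ξ) / μ = -(4 * Rϱ / μ * (ξ - 0)) by ring]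
  exact mul_exp_le_of_neg_mul_le_deriv hΓd hΓ' hξ

/-- Along a trajectory of the gravity–diffusion system with uniformly positive
denominator, Γ satisfies Γ' ≥ −(4R_ϱ/μ)Γ and hence an exponential lower bound,
so it cannot reach zero in finite time. -/
theorem stmt_16 (G D Hstar Rϱ μ ξω : ℝ)
    (hG : 0 < G) (hD : 0 < D) (hHstar : 0 < Hstar) (hμ : 0 < μ) (hξω : 0 < ξω)
    (ϱ : ℝ → ℝ) (hϱnonneg : ∀ z ∈ Icc (0:ℝ) 1, 0 ≤ ϱ z)
    (hRϱ : ∀ z ∈ Icc (0:ℝ) 1, ϱ z ≤ Rϱ)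
    (H Γ : ℝ → ℝ)
    (hHrange : ∀ ξ ∈ Ico (0:ℝ) ξω, H ξ ∈ Ioo Hstar (2 * Hstar))
    (hΓrange : ∀ ξ ∈ Ico (0:ℝ) ξω, Γ ξ ∈ Ioo (0:ℝ) 1)
    (hHd : ∀ ξ ∈ Ico (0:ℝ) ξω,
      HasDerivAt H ((6 * Γ ξ * H ξ * (2 * Hstar - H ξ)
          - 12 * D * (H ξ - Hstar) * ϱ (Γ ξ))
        / (G * (H ξ)^3 * (Γ ξ * H ξ + 4 * D * ϱ (Γ ξ)))) ξ)
    (hΓd : ∀ ξ ∈ Ico (0:ℝ) ξω,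
      HasDerivAt Γ (2 * Γ ξ * (H ξ - 3 * Hstar) * ϱ (Γ ξ)
        / (H ξ * (Γ ξ * H ξ + 4 * D * ϱ (Γ ξ)))) ξ)
    (hμbound : ∀ ξ ∈ Ico (0:ℝ) ξω, μ ≤ Γ ξ * H ξ + 4 * D * ϱ (Γ ξ)) :
    (∀ ξ ∈ Ico (0:ℝ) ξω, -(4 * Rϱ / μ) * Γ ξ ≤ deriv Γ ξ) ∧
      (∀ ξ ∈ Ico (0:ℝ) ξω, Γ 0 * Real.exp (-(4 * Rϱ * ξ) / μ) ≤ Γ ξ) ∧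
      (∀ ξ ∈ Ico (0:ℝ) ξω, 0 < Γ ξ) :=
  stmt_16_general D Hstar Rϱ μ ξω hμ ϱ hϱnonneg hRϱ H Γ hHrange hΓrange hΓd hμbound
end

section
/- Let (H, Γ) be a global solution on ℝ of H' = f₁(H, Γ), Γ' = f₂(H, Γ) with (H, Γ)(ξ) ∈ (H*, 2H*) × (0, 1) for all ξ ∈ ℝ. Then Γ' ≤ −Γϱ(Γ)/(2H* + 4DR_ϱ) ≤ 0 on ℝ, Γ(ξ) converges as ξ → −∞ to some Γ_α with ϱ(Γ_α) = 0, and hence Γ(ξ) → 1 as ξ → −∞. -/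
/-!
Writing `P = 2H* + 4DR_ϱ`, on the rectangle `(H*, 2H*) × (0, 1)` the factor `H - 3H*` is below `-H*`
while `H (ΓH + 4Dϱ) < 2H* P`, which gives `Γ' ≤ -Γϱ(Γ)/P`. So `Γ` is nonincreasing and bounded,
and converges at `-∞` to some `Γ_α ∈ (0, 1]`. If `Γ_α ϱ(Γ_α) > 0`, then `Γ'` would stay below a
negative constant near `-∞`, forcing `Γ → +∞` there; hence `ϱ(Γ_α) = 0`, i.e. `Γ_α = 1`.
-/

open Set Filter Topology

theorem f₂_le_neg_mul_div {D Hstar R a h r : ℝ} (hD : 0 ≤ D)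
    (ha₀ : 0 < a) (ha₁ : a < 1) (hh₁ : Hstar < h) (hh₂ : h < 2 * Hstar)
    (hr₀ : 0 < r) (hr₁ : r ≤ R) :
    2 * a * (h - 3 * Hstar) * r / (h * (a * h + 4 * D * r))
      ≤ -(a * r) / (2 * Hstar + 4 * D * R) := by
  have hh₀ : 0 < h := by linarith
  have hsum : a * h + 4 * D * r ≤ 2 * Hstar + 4 * D * R := by
    nlinarith [mul_le_mul_of_nonneg_left hr₁ hD]
  have hden : 0 < a * h + 4 * D * r := by positivity
  rw [div_le_div_iff₀ (by positivity) (by linarith)]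
  have hprod : h * (a * h + 4 * D * r) ≤ 2 * Hstar * (2 * Hstar + 4 * D * R) :=
    mul_le_mul hh₂.le hsum hden.le (by linarith)
  have key : 2 * (h - 3 * Hstar) * (2 * Hstar + 4 * D * R) + h * (a * h + 4 * D * r) ≤ 0 := by
    nlinarith
  nlinarith [mul_nonpos_of_nonneg_of_nonpos (mul_pos ha₀ hr₀).le key]

theorem tendsto_atBot_atTop_of_deriv_le_neg {f : ℝ → ℝ} (hf : Differentiable ℝ f) {ε : ℝ}
    (hε : 0 < ε) (hf' : ∀ᶠ x in atBot, deriv f x ≤ -ε) : Tendsto f atBot atTop := by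
  obtain ⟨T, hT⟩ := eventually_atBot.1 hf'
  have hlin : ∀ x ≤ T, f T + ε * (T - x) ≤ f x := fun x hx => by
    have := (convex_Iic T).image_sub_le_mul_sub_of_deriv_le hf.continuous.continuousOn
      hf.differentiableOn (fun y hy => hT y (interior_subset (s := Iic T) hy))
      x hx T (mem_Iic.2 le_rfl) hx
    linarith
  refine tendsto_atTop.2 fun b => eventually_atBot.2 ⟨min T (T - (b - f T) / ε), fun x hx => ?_⟩
  have hxT := hx.trans (min_le_left _ _)
  have hxb : (b - f T) / ε ≤ T - x := by linarith [min_le_right T (T - (b - f T) / ε)]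
  have := (div_le_iff₀ hε).1 hxb
  linarith [hlin x hxT]

theorem nonpos_of_tendsto_atBot_of_deriv_le {f g : ℝ → ℝ} {s : Set ℝ} {l : ℝ}
    (hf : Differentiable ℝ f) (hfs : ∀ x, f x ∈ s) (hlim : Tendsto f atBot (𝓝 l))
    (hg : ContinuousWithinAt g s l) (hf' : ∀ x, deriv f x ≤ -g (f x)) : g l ≤ 0 := by
  by_contra! hpos
  have hgf : Tendsto (g ∘ f) atBot (𝓝 (g l)) :=
    hg.tendsto.comp (tendsto_nhdsWithin_iff.2 ⟨hlim, Eventually.of_forall hfs⟩)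
  have hderiv : ∀ᶠ x in atBot, deriv f x ≤ -(g l / 2) := by
    filter_upwards [hgf.eventually (eventually_gt_nhds (half_lt_self hpos))] with x hx
    linarith [hf' x, show g l / 2 < g (f x) from hx]
  exact not_tendsto_atTop_of_tendsto_nhds hlim
    (tendsto_atBot_atTop_of_deriv_le_neg hf (half_pos hpos) hderiv)

theorem stmt_18_general (D Hstar Rϱ : ℝ)
    (hD : 0 < D) (hHstar : 0 < Hstar)
    (ϱ : ℝ → ℝ) (hϱcont : ContinuousOn ϱ (Icc (0:ℝ) 1))
    (hϱpos : ∀ z ∈ Ico (0:ℝ) 1, 0 < ϱ z) (hϱ1 : ϱ 1 = 0)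
    (hRϱ : ∀ z ∈ Icc (0:ℝ) 1, ϱ z ≤ Rϱ) (hRϱpos : 0 < Rϱ)
    (H Γ : ℝ → ℝ)
    (hHrange : ∀ ξ : ℝ, H ξ ∈ Ioo Hstar (2 * Hstar))
    (hΓrange : ∀ ξ : ℝ, Γ ξ ∈ Ioo (0:ℝ) 1)
    (hΓd : ∀ ξ : ℝ,
      HasDerivAt Γ (2 * Γ ξ * (H ξ - 3 * Hstar) * ϱ (Γ ξ)
        / (H ξ * (Γ ξ * H ξ + 4 * D * ϱ (Γ ξ)))) ξ) :
    (∀ ξ : ℝ, deriv Γ ξ ≤ -(Γ ξ * ϱ (Γ ξ)) / (2 * Hstar + 4 * D * Rϱ) ∧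
        deriv Γ ξ ≤ 0) ∧
      (∃ Γα : ℝ, Filter.Tendsto Γ Filter.atBot (nhds Γα) ∧ ϱ Γα = 0) ∧
      Filter.Tendsto Γ Filter.atBot (nhds 1) := by
  have hP : 0 < 2 * Hstar + 4 * D * Rϱ := by positivity
  have hΓIcc ξ : Γ ξ ∈ Icc (0:ℝ) 1 := Ioo_subset_Icc_self (hΓrange ξ)
  have hϱΓ ξ : 0 < ϱ (Γ ξ) := hϱpos _ (Ioo_subset_Ico_self (hΓrange ξ))
  have hbound ξ : deriv Γ ξ ≤ -(Γ ξ * ϱ (Γ ξ)) / (2 * Hstar + 4 * D * Rϱ) := by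
    rw [(hΓd ξ).deriv]
    exact f₂_le_neg_mul_div hD.le (hΓrange ξ).1 (hΓrange ξ).2 (hHrange ξ).1 (hHrange ξ).2
      (hϱΓ ξ) (hRϱ _ (hΓIcc ξ))
  have hnonpos ξ : deriv Γ ξ ≤ 0 :=
    (hbound ξ).trans <|
      div_nonpos_of_nonpos_of_nonneg (neg_nonpos.2 (mul_pos (hΓrange ξ).1 (hϱΓ ξ)).le) hP.le
  have hdiff : Differentiable ℝ Γ := fun ξ => (hΓd ξ).differentiableAt
  have hbdd : BddAbove (range Γ) := ⟨1, forall_mem_range.2 fun ξ => (hΓIcc ξ).2⟩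
  have hlim : Tendsto Γ atBot (𝓝 (⨆ ξ, Γ ξ)) :=
    tendsto_atBot_ciSup (antitone_of_deriv_nonpos hdiff hnonpos) hbdd
  have hαIcc : (⨆ ξ, Γ ξ) ∈ Icc (0:ℝ) 1 := isClosed_Icc.mem_of_tendsto hlim (.of_forall hΓIcc)
  have hα1 : (⨆ ξ, Γ ξ) = 1 := by
    set α := ⨆ ξ, Γ ξ
    have hα₀ : 0 < α := (hΓrange 0).1.trans_le (le_ciSup hbdd 0)
    have hαϱ : α * ϱ α / (2 * Hstar + 4 * D * Rϱ) ≤ 0 :=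
      nonpos_of_tendsto_atBot_of_deriv_le (g := fun z => z * ϱ z / (2 * Hstar + 4 * D * Rϱ))
        hdiff hΓIcc hlim
        ((continuousWithinAt_id.mul (hϱcont α hαIcc)).div_const _)
        fun ξ => (hbound ξ).trans_eq (neg_div _ _)
    by_contra hne
    have := hϱpos α ⟨hα₀.le, hαIcc.2.lt_of_ne hne⟩
    have : 0 < α * ϱ α / (2 * Hstar + 4 * D * Rϱ) := by positivity
    linarith
  exact ⟨fun ξ => ⟨hbound ξ, hnonpos ξ⟩, ⟨1, hα1 ▸ hlim, hϱ1⟩, hα1 ▸ hlim⟩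

/-- Along a global trajectory of the gravity–diffusion system staying in the
open rectangle, Γ is nonincreasing with a quantitative bound and Γ → 1 as
ξ → −∞. -/
theorem stmt_18 (G D Hstar Rϱ : ℝ)
    (hG : 0 < G) (hD : 0 < D) (hHstar : 0 < Hstar)
    (ϱ : ℝ → ℝ) (hϱcont : ContinuousOn ϱ (Icc (0:ℝ) 1))
    (hϱpos : ∀ z ∈ Ico (0:ℝ) 1, 0 < ϱ z) (hϱ1 : ϱ 1 = 0)
    (hRϱ : ∀ z ∈ Icc (0:ℝ) 1, ϱ z ≤ Rϱ) (hRϱpos : 0 < Rϱ)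
    (H Γ : ℝ → ℝ)
    (hHrange : ∀ ξ : ℝ, H ξ ∈ Ioo Hstar (2 * Hstar))
    (hΓrange : ∀ ξ : ℝ, Γ ξ ∈ Ioo (0:ℝ) 1)
    (hHd : ∀ ξ : ℝ,
      HasDerivAt H ((6 * Γ ξ * H ξ * (2 * Hstar - H ξ)
          - 12 * D * (H ξ - Hstar) * ϱ (Γ ξ))
        / (G * (H ξ)^3 * (Γ ξ * H ξ + 4 * D * ϱ (Γ ξ)))) ξ)
    (hΓd : ∀ ξ : ℝ,
      HasDerivAt Γ (2 * Γ ξ * (H ξ - 3 * Hstar) * ϱ (Γ ξ)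
        / (H ξ * (Γ ξ * H ξ + 4 * D * ϱ (Γ ξ)))) ξ) :
    (∀ ξ : ℝ, deriv Γ ξ ≤ -(Γ ξ * ϱ (Γ ξ)) / (2 * Hstar + 4 * D * Rϱ) ∧
        deriv Γ ξ ≤ 0) ∧
      (∃ Γα : ℝ, Filter.Tendsto Γ Filter.atBot (nhds Γα) ∧ ϱ Γα = 0) ∧
      Filter.Tendsto Γ Filter.atBot (nhds 1) :=
  stmt_18_general D Hstar Rϱ hD hHstar ϱ hϱcont hϱpos hϱ1 hRϱ hRϱpos H Γ hHrange hΓrange hΓd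
end

section
/- Suppose G > 0, D > 0, and (H, Γ) is a continuous stationary solution, i.e. (GH³/3)H' − (H²/2)σ'(Γ)Γ' = 0 and (GH²/2)ΓH' − (HΓσ'(Γ) − D)Γ' = 0 on ℝ with H ≥ 0 and 0 ≤ Γ < 1 and H not identically 0. Then H·Γ' = 0 on ℝ, and if H > 0 everywhere then both H and Γ are constant. -/
/-!
Eliminating `H'` between the two stationary equations (four times `H` times the second minus six
times `Γ` times the first) leaves `H Γ' (4D - H Γ σ'(Γ)) = 0`. The second factor is positive
because `H, Γ ≥ 0` and `σ' < 0`, so `H Γ' = 0`. Where `H > 0` this forces `Γ' = 0`, and then the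
first equation forces `H' = 0`.
-/

open Set

theorem exists_forall_eq_of_hasDerivAt_zero {𝕜 E : Type*} [RCLike 𝕜] [NormedAddCommGroup E]
    [NormedSpace 𝕜 E] {f : 𝕜 → E} (hf : ∀ x, HasDerivAt f 0 x) : ∃ c, ∀ x, f x = c :=
  ⟨f 0, fun x => is_const_of_deriv_eq_zero (fun y => (hf y).differentiableAt)
    (fun y => (hf y).deriv) x 0⟩

section Stationary

variable {G D h γ s h' γ' : ℝ}

theorem mul_deriv_eq_zero_of_stationary (hD : 0 < D) (hh : 0 ≤ h) (hγ : 0 ≤ γ) (hs : s ≤ 0)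
    (e1 : G * h ^ 3 / 3 * h' - h ^ 2 / 2 * s * γ' = 0)
    (e2 : G * h ^ 2 / 2 * γ * h' - (h * γ * s - D) * γ' = 0) : h * γ' = 0 := by
  have key : h * γ' * (4 * D - h * γ * s) = 0 := by
    linear_combination 4 * h * e2 - 6 * γ * e1
  have hsign : h * γ * s ≤ 0 := mul_nonpos_of_nonneg_of_nonpos (mul_nonneg hh hγ) hs
  exact (mul_eq_zero.mp key).resolve_right (by linarith)

theorem deriv_eq_zero_of_stationary (hG : 0 < G) (hh : 0 < h)
    (e1 : G * h ^ 3 / 3 * h' - h ^ 2 / 2 * s * γ' = 0) (hγ' : γ' = 0) : h' = 0 := by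
  have hlin : G * h ^ 3 / 3 * h' = 0 := by simpa [hγ'] using e1
  exact (mul_eq_zero.mp hlin).resolve_left (by positivity)

end Stationary

theorem stmt_19_general (G D : ℝ) (hG : 0 < G) (hD : 0 < D)
    (σ' : ℝ → ℝ) (hσ'neg : ∀ z ∈ Ico (0:ℝ) 1, σ' z < 0)
    (H Γ H' Γ' : ℝ → ℝ)
    (hHnonneg : ∀ ξ, 0 ≤ H ξ) (hΓrange : ∀ ξ, Γ ξ ∈ Ico (0:ℝ) 1)
    (hHd : ∀ ξ, HasDerivAt H (H' ξ) ξ)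
    (hΓd : ∀ ξ, HasDerivAt Γ (Γ' ξ) ξ)
    (heq1 : ∀ ξ, G * (H ξ)^3 / 3 * H' ξ - (H ξ)^2 / 2 * σ' (Γ ξ) * Γ' ξ = 0)
    (heq2 : ∀ ξ, G * (H ξ)^2 / 2 * Γ ξ * H' ξ
        - (H ξ * Γ ξ * σ' (Γ ξ) - D) * Γ' ξ = 0) :
    (∀ ξ, H ξ * Γ' ξ = 0) ∧
      ((∀ ξ, 0 < H ξ) →
        ∃ cH cΓ : ℝ, (∀ ξ, H ξ = cH) ∧ ∀ ξ, Γ ξ = cΓ) := by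
  have hHΓ' : ∀ ξ, H ξ * Γ' ξ = 0 := fun ξ =>
    mul_deriv_eq_zero_of_stationary hD (hHnonneg ξ) (hΓrange ξ).1
      (hσ'neg _ (hΓrange ξ)).le (heq1 ξ) (heq2 ξ)
  refine ⟨hHΓ', fun hHpos => ?_⟩
  have hΓ'0 : ∀ ξ, Γ' ξ = 0 := fun ξ =>
    (mul_eq_zero.mp (hHΓ' ξ)).resolve_left (hHpos ξ).ne'
  have hH'0 : ∀ ξ, H' ξ = 0 := fun ξ =>
    deriv_eq_zero_of_stationary hG (hHpos ξ) (heq1 ξ) (hΓ'0 ξ)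
  obtain ⟨cH, hcH⟩ := exists_forall_eq_of_hasDerivAt_zero fun ξ => hH'0 ξ ▸ hHd ξ
  obtain ⟨cΓ, hcΓ⟩ := exists_forall_eq_of_hasDerivAt_zero fun ξ => hΓ'0 ξ ▸ hΓd ξ
  exact ⟨cH, cΓ, hcH, hcΓ⟩

/-- Continuous stationary solutions with G, D > 0 satisfy H·Γ' = 0; if H is
everywhere positive, then both H and Γ are constant. -/
theorem stmt_19 (G D : ℝ) (hG : 0 < G) (hD : 0 < D)
    (σ' : ℝ → ℝ) (hσ'neg : ∀ z ∈ Ico (0:ℝ) 1, σ' z < 0)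
    (H Γ H' Γ' : ℝ → ℝ)
    (hHnonneg : ∀ ξ, 0 ≤ H ξ) (hΓrange : ∀ ξ, Γ ξ ∈ Ico (0:ℝ) 1)
    (hHd : ∀ ξ, HasDerivAt H (H' ξ) ξ)
    (hΓd : ∀ ξ, HasDerivAt Γ (Γ' ξ) ξ)
    (hH'cont : Continuous H') (hΓ'cont : Continuous Γ')
    (hHne : ∃ ξ, H ξ ≠ 0)
    (heq1 : ∀ ξ, G * (H ξ)^3 / 3 * H' ξ - (H ξ)^2 / 2 * σ' (Γ ξ) * Γ' ξ = 0)
    (heq2 : ∀ ξ, G * (H ξ)^2 / 2 * Γ ξ * H' ξ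
        - (H ξ * Γ ξ * σ' (Γ ξ) - D) * Γ' ξ = 0) :
    (∀ ξ, H ξ * Γ' ξ = 0) ∧
      ((∀ ξ, 0 < H ξ) →
        ∃ cH cΓ : ℝ, (∀ ξ, H ξ = cH) ∧ ∀ ξ, Γ ξ = cΓ) :=
  stmt_19_general G D hG hD σ' hσ'neg H Γ H' Γ' hHnonneg hΓrange hHd hΓd heq1 heq2
end
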